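/- The sinhlog and coshlog endomorphisms are orthogonal: for every real inner product space and every family of vectors (V_w), and at every grade n, ⟨½(id−S), ½(id+S)⟩ = 0, where the inner product is taken over the words of length n. -/

import Mathlib

open Finsupp

/-- Words over the alphabet `A = {0,1,…,d}`. -/
abbrev Word (d : ℕ) : Type := List (Fin (d+1))

/-- The free real vector space with basis the set of all words. -/
abbrev KA (d : ℕ) : Type := Word d →₀ ℝ

/-- Shuffle product of two words, as an element of `KA d`. -/
noncomputable def shuffleWord (d : ℕ) : Word d → Word d → KA d
  | [], v => Finsupp.single v 1
  | a :: u, [] => Finsupp.single (a :: u) 1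
  | a :: u, b :: v =>
      Finsupp.mapDomain (List.cons a) (shuffleWord d u (b :: v)) +
      Finsupp.mapDomain (List.cons b) (shuffleWord d (a :: u) v)
  termination_by u v => u.length + v.length

/-- Bilinear extension of the shuffle product to `KA d`. -/
noncomputable def sh (d : ℕ) (x y : KA d) : KA d :=
  x.sum fun u cu => y.sum fun v cv => (cu * cv) • shuffleWord d u v

/-- Admissible words: concatenations of blocks each of which is the single
letter `0` or a pair `aa` with `a ≠ 0`. -/
inductive Admissible (d : ℕ) : Word d → Prop
  | nil : Admissible d []
  | zero {w : Word d} : Admissible d w → Admissible d (0 :: w)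
  | pair {w : Word d} (a : Fin (d+1)) : a ≠ 0 → Admissible d w →
      Admissible d (a :: a :: w)

/-- Number of `0` letters. -/
def zc (d : ℕ) (w : Word d) : ℕ := w.count 0

/-- Half the number of nonzero letters. -/
def dc (d : ℕ) (w : Word d) : ℕ := (w.length - w.count 0) / 2

def nc (d : ℕ) (w : Word d) : ℕ := zc d w + dc d w

open Classical in
/-- The expectation map on words. -/
noncomputable def Ebar (d : ℕ) (t : ℝ) (w : Word d) : ℝ :=
  if Admissible d w then t ^ nc d w / (2 ^ dc d w * Nat.factorial (nc d w)) else 0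

/-- Linear extension of the expectation map to `KA d`. -/
noncomputable def EbarL (d : ℕ) (t : ℝ) (x : KA d) : ℝ :=
  x.sum fun w c => c * Ebar d t w

/-- The linear endomorphism of `KA d` determined by values on basis words. -/
noncomputable def wordLift (d : ℕ) (f : Word d → KA d) : KA d →ₗ[ℝ] KA d :=
  Finsupp.lsum ℝ fun w => LinearMap.toSpanSingleton ℝ (KA d) (f w)

/-- The identity endomorphism `id`. -/
noncomputable def idE (d : ℕ) : KA d →ₗ[ℝ] KA d := LinearMap.id

/-- The reversal endomorphism `|S|`. -/
noncomputable def revE (d : ℕ) : KA d →ₗ[ℝ] KA d :=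
  wordLift d fun w => Finsupp.single w.reverse 1

/-- The antipode `S`. -/
noncomputable def Sa (d : ℕ) : KA d →ₗ[ℝ] KA d :=
  wordLift d fun w => Finsupp.single w.reverse ((-1 : ℝ) ^ w.length)

/-- The convolution unit `ν`. -/
noncomputable def nuE (d : ℕ) : KA d →ₗ[ℝ] KA d :=
  wordLift d fun w => if w = [] then Finsupp.single ([] : Word d) 1 else 0

/-- The expectation endomorphism `E`. -/
noncomputable def EE (d : ℕ) (t : ℝ) : KA d →ₗ[ℝ] KA d :=
  wordLift d fun w => Finsupp.single ([] : Word d) (Ebar d t w)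

/-- The convolution product `X ⋆ Y`. -/
noncomputable def conv (d : ℕ) (X Y : KA d →ₗ[ℝ] KA d) : KA d →ₗ[ℝ] KA d :=
  wordLift d fun w => ∑ k ∈ Finset.range (w.length + 1),
    sh d (X (Finsupp.single (w.take k) 1)) (Y (Finsupp.single (w.drop k) 1))

/-- Convolution powers, `X^{⋆0} = ν`. -/
noncomputable def convPow (d : ℕ) (X : KA d →ₗ[ℝ] KA d) : ℕ → (KA d →ₗ[ℝ] KA d)
  | 0 => nuE d
  | k + 1 => conv d X (convPow d X k)

/-- The inner product `⟨X,Y⟩` of endomorphisms, taken over the words of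
length `n`, relative to the family of vectors `Vf`. -/
noncomputable def ip (d : ℕ) (t : ℝ) {H : Type*} [NormedAddCommGroup H]
    [InnerProductSpace ℝ H] (Vf : Word d → H) (n : ℕ)
    (X Y : KA d →ₗ[ℝ] KA d) : ℝ :=
  ∑ u : Fin n → Fin (d+1), ∑ v : Fin n → Fin (d+1),
    EbarL d t (sh d (X (Finsupp.single (List.ofFn u) 1))
                    (Y (Finsupp.single (List.ofFn v) 1))) *
      (inner ℝ (Vf (List.ofFn u)) (Vf (List.ofFn v)) : ℝ)

/-- Positive semidefiniteness of the expectation Gram matrix at grade `n`: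
indexed by the words of length `n` together with the empty word. -/
def gramPSD (d n : ℕ) (t : ℝ) : Prop :=
  ∀ c : Option (Fin n → Fin (d+1)) → ℝ,
    0 ≤ ∑ x : Option (Fin n → Fin (d+1)), ∑ y : Option (Fin n → Fin (d+1)),
      c x * c y *
        EbarL d t (shuffleWord d (x.elim ([] : Word d) List.ofFn)
                                 (y.elim ([] : Word d) List.ofFn))


/-
Reversal of words is an automorphism of the shuffle algebra, and `Ē` is invariant under it,
since reversal preserves admissibility and letter counts. Hence `φ(u, v) := Ē(u ⧢ v)` satisfies
`φ(ū, v̄) = φ(u, v)` and `φ(ū, v) = φ(u, v̄)`, where `ū` is the reversal of `u`. For words `u`, `v`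
of the same length `n`, `S u = ε ū` and `S v = ε v̄` with `ε = (-1)ⁿ`, so
`4 Ē((u - S u) ⧢ (v + S v)) = φ(u, v) + ε φ(u, v̄) - ε φ(ū, v) - ε² φ(ū, v̄) = 0`,
and every summand of `⟨½(id - S), ½(id + S)⟩` vanishes.
-/

section Shuffle

variable {d : ℕ}

@[simp]
lemma shuffleWord_nil_left (v : Word d) : shuffleWord d [] v = single v 1 := by
  rw [shuffleWord]

@[simp]
lemma shuffleWord_nil_right (u : Word d) : shuffleWord d u [] = single u 1 := by
  cases u <;> rw [shuffleWord]

lemma shuffleWord_cons_cons (a b : Fin (d + 1)) (u v : Word d) :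
    shuffleWord d (a :: u) (b :: v) =
      mapDomain (List.cons a) (shuffleWord d u (b :: v)) +
        mapDomain (List.cons b) (shuffleWord d (a :: u) v) := by
  rw [shuffleWord]

lemma shuffleWord_append_singleton (a b : Fin (d + 1)) : ∀ u v : Word d,
    shuffleWord d (u ++ [a]) (v ++ [b]) =
      mapDomain (· ++ [a]) (shuffleWord d u (v ++ [b])) +
        mapDomain (· ++ [b]) (shuffleWord d (u ++ [a]) v)
  | [], [] => by
    simp only [List.nil_append, shuffleWord_cons_cons, shuffleWord_nil_left,
      shuffleWord_nil_right, mapDomain_single, List.singleton_append]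
    abel
  | [], c :: v => by
    have ih := shuffleWord_append_singleton a b [] v
    simp only [List.nil_append, List.cons_append, shuffleWord_cons_cons,
      shuffleWord_nil_left] at ih ⊢
    rw [ih]
    simp only [mapDomain_add, mapDomain_single, ← mapDomain_comp,
      Function.comp_def, List.cons_append]
    abel
  | c :: u, [] => by
    have ih := shuffleWord_append_singleton a b u []
    simp only [List.nil_append, List.cons_append, shuffleWord_cons_cons,
      shuffleWord_nil_right] at ih ⊢
    rw [ih]
    simp only [mapDomain_add, mapDomain_single, ← mapDomain_comp,
      Function.comp_def, List.cons_append]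
    abel
  | c :: u, c' :: v => by
    have ih₁ := shuffleWord_append_singleton a b u (c' :: v)
    have ih₂ := shuffleWord_append_singleton a b (c :: u) v
    simp only [List.cons_append] at ih₁ ih₂ ⊢
    rw [shuffleWord_cons_cons, ih₁, ih₂, shuffleWord_cons_cons, shuffleWord_cons_cons]
    simp only [mapDomain_add, ← mapDomain_comp, Function.comp_def, List.cons_append]
    abel
termination_by u v => u.length + v.length

lemma shuffleWord_reverse : ∀ u v : Word d,
    shuffleWord d u.reverse v.reverse = mapDomain List.reverse (shuffleWord d u v)
  | [], v => by simp
  | a :: u, [] => by simp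
  | a :: u, b :: v => by
    rw [List.reverse_cons, List.reverse_cons, shuffleWord_append_singleton,
      ← List.reverse_cons, ← List.reverse_cons, shuffleWord_reverse u (b :: v),
      shuffleWord_reverse (a :: u) v, shuffleWord_cons_cons]
    simp only [mapDomain_add, ← mapDomain_comp, Function.comp_def, List.reverse_cons]
termination_by u v => u.length + v.length

lemma sh_single_single (u v : Word d) (a b : ℝ) :
    sh d (single u a) (single v b) = (a * b) • shuffleWord d u v := by
  simp [sh, sum_single_index]

lemma sh_add_left (x x' y : KA d) : sh d (x + x') y = sh d x y + sh d x' y := by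
  unfold sh
  rw [sum_add_index' (by simp)]
  intro u b₁ b₂
  rw [← sum_add]
  simp [add_mul, add_smul]

lemma sh_add_right (x y y' : KA d) : sh d x (y + y') = sh d x y + sh d x y' := by
  unfold sh
  rw [← sum_add]
  congr 1
  ext u cu
  rw [sum_add_index' (by simp)]
  intro v b₁ b₂
  simp [mul_add, add_smul]

end Shuffle

namespace Admissible

variable {d : ℕ} {w : Word d}

lemma append_zero (h : Admissible d w) : Admissible d (w ++ [0]) := by
  induction h with
  | nil => exact .zero .nil
  | zero _ ih => exact .zero ih
  | pair a ha _ ih => exact .pair a ha ih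

lemma append_pair {a : Fin (d + 1)} (ha : a ≠ 0) (h : Admissible d w) :
    Admissible d (w ++ [a, a]) := by
  induction h with
  | nil => exact .pair a ha .nil
  | zero _ ih => exact .zero ih
  | pair b hb _ ih => exact .pair b hb ih

lemma reverse (h : Admissible d w) : Admissible d w.reverse := by
  induction h with
  | nil => exact .nil
  | zero _ ih => simpa using ih.append_zero
  | pair a ha _ ih => simpa using ih.append_pair ha

end Admissible

section Expectation

variable {d : ℕ} (t : ℝ)

lemma admissible_reverse_iff (w : Word d) : Admissible d w.reverse ↔ Admissible d w :=
  ⟨fun h => by simpa using h.reverse, Admissible.reverse⟩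

lemma Ebar_reverse (w : Word d) : Ebar d t w.reverse = Ebar d t w := by
  simp only [Ebar, nc, zc, dc, List.count_reverse, List.length_reverse]
  rw [admissible_reverse_iff]

lemma EbarL_eq_linearCombination : EbarL d t = linearCombination ℝ (Ebar d t) := by
  ext x
  simp [EbarL, linearCombination_apply]

lemma EbarL_mapDomain_reverse (x : KA d) :
    EbarL d t (mapDomain List.reverse x) = EbarL d t x := by
  rw [EbarL_eq_linearCombination, linearCombination_mapDomain]
  congr 2
  exact funext (Ebar_reverse t)

lemma EbarL_shuffleWord_reverse_reverse (u v : Word d) :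
    EbarL d t (shuffleWord d u.reverse v.reverse) = EbarL d t (shuffleWord d u v) := by
  rw [shuffleWord_reverse, EbarL_mapDomain_reverse]

lemma EbarL_shuffleWord_reverse_left (u v : Word d) :
    EbarL d t (shuffleWord d u.reverse v) = EbarL d t (shuffleWord d u v.reverse) := by
  rw [← EbarL_shuffleWord_reverse_reverse t u.reverse, List.reverse_reverse]

end Expectation

noncomputable def sinhlog (d : ℕ) : KA d →ₗ[ℝ] KA d := (1 / 2 : ℝ) • (idE d - Sa d)

noncomputable def coshlog (d : ℕ) : KA d →ₗ[ℝ] KA d := (1 / 2 : ℝ) • (idE d + Sa d)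

section SinhlogCoshlog

variable {d : ℕ}

lemma Sa_single (u : Word d) : Sa d (single u 1) = single u.reverse ((-1 : ℝ) ^ u.length) := by
  simp [Sa, wordLift]

lemma sinhlog_single (u : Word d) :
    sinhlog d (single u 1) =
      single u (1 / 2) + single u.reverse (-(-1 : ℝ) ^ u.length / 2) := by
  simp only [sinhlog, LinearMap.smul_apply, LinearMap.sub_apply, idE, LinearMap.id_apply,
    Sa_single, sub_eq_add_neg, ← single_neg, smul_add, smul_single, smul_eq_mul]
  ring_nf

lemma coshlog_single (v : Word d) :
    coshlog d (single v 1) =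
      single v (1 / 2) + single v.reverse ((-1 : ℝ) ^ v.length / 2) := by
  simp only [coshlog, LinearMap.smul_apply, LinearMap.add_apply, idE, LinearMap.id_apply,
    Sa_single, smul_add, smul_single, smul_eq_mul]
  ring_nf

lemma EbarL_sh_sinhlog_coshlog (t : ℝ) {u v : Word d} (h : u.length = v.length) :
    EbarL d t (sh d (sinhlog d (single u 1)) (coshlog d (single v 1))) = 0 := by
  simp only [sinhlog_single, coshlog_single, sh_add_left, sh_add_right, sh_single_single,
    EbarL_eq_linearCombination, map_add, map_smul, smul_eq_mul]
  rw [← EbarL_eq_linearCombination, EbarL_shuffleWord_reverse_reverse,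
    EbarL_shuffleWord_reverse_left, h]
  have hε : ((-1 : ℝ) ^ v.length) ^ 2 = 1 := by rw [← pow_mul, pow_mul', neg_one_sq, one_pow]
  linear_combination (-EbarL d t (shuffleWord d u v) / 4) * hε

end SinhlogCoshlog

theorem stmt_11_general (d n : ℕ) (t : ℝ)
    {H : Type*} [NormedAddCommGroup H] [InnerProductSpace ℝ H]
    (Vf : Word d → H) :
    ip d t Vf n ((1 / 2 : ℝ) • (idE d - Sa d)) ((1 / 2 : ℝ) • (idE d + Sa d)) = 0 :=
  Finset.sum_eq_zero fun u _ => Finset.sum_eq_zero fun v _ =>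
    mul_eq_zero_of_left (EbarL_sh_sinhlog_coshlog t (by simp)) _

theorem stmt_11 (d n : ℕ) (hd : 1 ≤ d) (hn : 1 ≤ n) (t : ℝ) (ht : 0 < t)
    {H : Type*} [NormedAddCommGroup H] [InnerProductSpace ℝ H]
    (Vf : Word d → H) :
    ip d t Vf n ((1 / 2 : ℝ) • (idE d - Sa d)) ((1 / 2 : ℝ) • (idE d + Sa d)) = 0 :=
  stmt_11_general d n t Vf
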